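/- (Relation between the Szegő–Radon kernel and the Szegő kernel.) Let t, s ∈ ℝ^m be unit vectors with ⟨t,s⟩ = 0, τ := ι(t) + i·ι(s), τ† := -ι(t) + i·ι(s) ∈ Cl, τ†_v := -t + i·s ∈ ℂ^m, ⟨u,τ⟩ := ⟨u,t⟩ + i⟨u,s⟩, ⟨ω,τ†⟩ := -⟨ω,t⟩ + i⟨ω,s⟩. For z, w ∈ ℂ^m write (z,w) := ∑_{j=1}^m z_j w_j for the complex bilinear pairing, and let S(z,ω) := (Γ(m/2)/(2π^{m/2})) · (1 + ι(z)·ι(ω)) · (1 + (z,z) - 2(z,ω))^{-m/2} ∈ Cl be the (complexified) Szegő kernel, where the power is the principal complex power. Then for every u ∈ ℝ^m with |u| < 1 and every ω ∈ S^{m-1}, setting z := -(1/2)⟨u,τ⟩·τ†_v, one has (τ·τ†/4) · S(z,ω) = (τ·τ†/4) · (Γ(m/2)/(2π^{m/2})) · (1 + ⟨u,τ⟩⟨ω,τ†⟩)^{-m/2}; that is, the Szegő–Radon kernel K_τ(u,ω) := (τ·τ†/4)(Γ(m/2)/(2π^{m/2}))(1+⟨u,τ⟩⟨ω,τ†⟩)^{-m/2}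 satisfies K_τ(u,ω) = (τ·τ†/4)·S(-(1/2)⟨u,τ⟩τ†_v, ω). -/

import Mathlib

open MeasureTheory

noncomputable section

/-- The quadratic form `Q(z) = -∑ z_j²` on `ℂ^m`. -/
def Qf (m : ℕ) : QuadraticForm ℂ (Fin m → ℂ) :=
  QuadraticMap.weightedSumSquares ℂ (fun _ : Fin m => (-1 : ℂ))

/-- The complex Clifford algebra `ℂ_m`. -/
abbrev Cl (m : ℕ) := CliffordAlgebra (Qf m)

/-- The canonical embedding `ι : ℂ^m → Cl`. -/
def ιC {m : ℕ} (z : Fin m → ℂ) : Cl m := CliffordAlgebra.ι (Qf m) z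

/-- A real vector of `ℝ^m` regarded as an element of `ℂ^m`. -/
def cVec {m : ℕ} (x : EuclideanSpace ℝ (Fin m)) : Fin m → ℂ := fun j => (x j : ℂ)

/-- `τ = ι(t) + i ι(s)`. -/
def tau {m : ℕ} (t s : EuclideanSpace ℝ (Fin m)) : Cl m :=
  ιC (cVec t) + Complex.I • ιC (cVec s)

/-- `τ† = -ι(t) + i ι(s)`, the Hermitian conjugate of `τ`. -/
def taud {m : ℕ} (t s : EuclideanSpace ℝ (Fin m)) : Cl m :=
  -ιC (cVec t) + Complex.I • ιC (cVec s)

/-- The complex pairing `⟨x,τ⟩ = ⟨x,t⟩ + i⟨x,s⟩` for `x ∈ ℝ^m`. -/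
def pairTau {m : ℕ} (t s x : EuclideanSpace ℝ (Fin m)) : ℂ :=
  ((inner ℝ x t : ℝ) : ℂ) + Complex.I * ((inner ℝ x s : ℝ) : ℂ)

/-- The complex pairing `⟨x,τ†⟩ = -⟨x,t⟩ + i⟨x,s⟩` for `x ∈ ℝ^m`. -/
def pairTaud {m : ℕ} (t s x : EuclideanSpace ℝ (Fin m)) : ℂ :=
  -((inner ℝ x t : ℝ) : ℂ) + Complex.I * ((inner ℝ x s : ℝ) : ℂ)

/-- The generator `e_j = ι(ε_j)`. -/
def gen {m : ℕ} (j : Fin m) : Cl m := ιC (Pi.single j 1)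

/-- The Bargmann–Radon kernel `B_τ(u,x) = (τ τ†/4) exp(-(1/2)⟨u,τ⟩⟨x,τ†⟩)`. -/
def BKer {m : ℕ} (t s u x : EuclideanSpace ℝ (Fin m)) : Cl m :=
  ((4 : ℂ)⁻¹ * Complex.exp (-(1 / 2 : ℂ) * pairTau t s u * pairTaud t s x)) •
    (tau t s * taud t s)

/-- A real vector of `ℝ^m` regarded as an element of the Hermitian space `ℂ^m`. -/
def toC {m : ℕ} (x : EuclideanSpace ℝ (Fin m)) : EuclideanSpace ℂ (Fin m) :=
  WithLp.toLp 2 (fun j => (x j : ℂ))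

/-- `F : ℂ^m → Cl` is (left) monogenic: `∑_j e_j ∂F/∂z_j = 0`. -/
def MonogenicC {m : ℕ} [NormedAddCommGroup (Cl m)] [NormedSpace ℂ (Cl m)]
    (F : EuclideanSpace ℂ (Fin m) → Cl m) : Prop :=
  ∀ z, ∑ j : Fin m, gen j * fderiv ℂ F z (EuclideanSpace.single j 1) = 0

/-- The Bargmann–Radon operator `P`. -/
def Pop {m : ℕ} [NormedAddCommGroup (Cl m)] [NormedSpace ℂ (Cl m)]
    (t s : EuclideanSpace ℝ (Fin m)) (f : EuclideanSpace ℝ (Fin m) → Cl m) :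
    EuclideanSpace ℝ (Fin m) → Cl m := fun u =>
  ((2 * Real.pi) ^ (-(m : ℝ) / 2)) •
    ∫ x : EuclideanSpace ℝ (Fin m), Real.exp (-‖x‖ ^ 2 / 2) • (BKer t s u x * f x)

/-- The nullcone vector `τ† = -t + i s ∈ ℂ^m`. -/
def taudVec {m : ℕ} (t s : EuclideanSpace ℝ (Fin m)) : EuclideanSpace ℂ (Fin m) :=
  WithLp.toLp 2 (fun j => -(t j : ℂ) + Complex.I * (s j : ℂ))

/-- Embedding `ι` on elements of the Hermitian space `ℂ^m`. -/
def ιE {m : ℕ} (z : EuclideanSpace ℂ (Fin m)) : Cl m := ιC (fun j => z j)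

/-- The complex bilinear pairing `(z,w) = ∑_j z_j w_j`. -/
def bil {m : ℕ} (z w : EuclideanSpace ℂ (Fin m)) : ℂ := ∑ j, z j * w j

/-- The complexified Szegő kernel `S(z,ω)`. -/
def SzegoKer (m : ℕ) (z : EuclideanSpace ℂ (Fin m)) (ω : EuclideanSpace ℝ (Fin m)) : Cl m :=
  (((Real.Gamma ((m : ℝ) / 2) / (2 * Real.pi ^ ((m : ℝ) / 2)) : ℝ) : ℂ) *
      (1 + bil z z - 2 * bil z (toC ω)) ^ (-(m : ℂ) / 2)) •
    (1 + ιE z * ιE (toC ω))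

/-!
The vector `τ†_v = -t + i s` is isotropic for the bilinear pairing, so `z := c τ†_v` with
`c = -⟨u,τ⟩/2` satisfies `(z,z) = 0` and `(z,ω) = c⟨ω,τ†⟩`, which turns the scalar factor of
`S(z,ω)` into `(1 + ⟨u,τ⟩⟨ω,τ†⟩)^{-m/2}`. In the Clifford algebra `ι(z) = c τ†` and
`τ† τ† = -(τ†_v,τ†_v) = 0`, so the left factor `τ τ†` annihilates `ι(z) ι(ω)`.
-/

open Finset

section Pairing

variable {m : ℕ}

lemma bil_smul_left (c : ℂ) (z w : EuclideanSpace ℂ (Fin m)) : bil (c • z) w = c * bil z w := by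
  simp only [bil, PiLp.smul_apply, smul_eq_mul, mul_sum, mul_assoc]

lemma bil_smul_right (c : ℂ) (z w : EuclideanSpace ℂ (Fin m)) :
    bil z (c • w) = c * bil z w := by
  simp only [bil, PiLp.smul_apply, smul_eq_mul, mul_sum]
  exact sum_congr rfl fun j _ => by ring

lemma bil_taudVec_self (t s : EuclideanSpace ℝ (Fin m)) :
    bil (taudVec t s) (taudVec t s) =
      ((‖t‖ ^ 2 - ‖s‖ ^ 2 : ℝ) : ℂ) - 2 * Complex.I * ((inner ℝ t s : ℝ) : ℂ) := by
  simp only [bil, taudVec, PiLp.toLp_apply, EuclideanSpace.norm_sq_eq, Real.norm_eq_abs, sq_abs,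
    PiLp.inner_apply, RCLike.inner_apply, conj_trivial]
  push_cast
  rw [mul_sum, ← sum_sub_distrib, ← sum_sub_distrib]
  refine sum_congr rfl fun j _ => ?_
  linear_combination (s j : ℂ) ^ 2 * Complex.I_sq

lemma bil_taudVec_self_eq_zero {t s : EuclideanSpace ℝ (Fin m)} (ht : ‖t‖ = 1) (hs : ‖s‖ = 1)
    (hts : inner ℝ t s = (0 : ℝ)) : bil (taudVec t s) (taudVec t s) = 0 := by
  simp [bil_taudVec_self, ht, hs, hts]

lemma bil_taudVec_toC (t s x : EuclideanSpace ℝ (Fin m)) :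
    bil (taudVec t s) (toC x) = pairTaud t s x := by
  simp only [bil, taudVec, toC, pairTaud, PiLp.toLp_apply, PiLp.inner_apply, RCLike.inner_apply,
    conj_trivial]
  push_cast
  rw [mul_sum, ← sum_neg_distrib, ← sum_add_distrib]
  exact sum_congr rfl fun j _ => by ring

end Pairing

section Clifford

variable {m : ℕ}

lemma ιE_smul (c : ℂ) (z : EuclideanSpace ℂ (Fin m)) : ιE (c • z) = c • ιE z :=
  (CliffordAlgebra.ι (Qf m)).map_smul c _

lemma ιE_taudVec (t s : EuclideanSpace ℝ (Fin m)) : ιE (taudVec t s) = taud t s := by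
  rw [taud, ιC, ιC, ← LinearMap.map_smul, ← map_neg, ← map_add]
  rfl

lemma Qf_apply (z : Fin m → ℂ) : Qf m z = -∑ j, z j * z j := by
  simp only [Qf, QuadraticMap.weightedSumSquares_apply, smul_eq_mul, neg_one_mul, sum_neg_distrib]

lemma ιE_mul_self (z : EuclideanSpace ℂ (Fin m)) :
    ιE z * ιE z = algebraMap ℂ (Cl m) (-bil z z) := by
  rw [ιE, ιC, CliffordAlgebra.ι_sq_scalar, Qf_apply, bil]

lemma taud_mul_self {t s : EuclideanSpace ℝ (Fin m)} (ht : ‖t‖ = 1) (hs : ‖s‖ = 1)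
    (hts : inner ℝ t s = (0 : ℝ)) : taud t s * taud t s = 0 := by
  rw [← ιE_taudVec, ιE_mul_self, bil_taudVec_self_eq_zero ht hs hts, neg_zero, map_zero]

end Clifford

theorem stmt11_general (m : ℕ)
    (t s : EuclideanSpace ℝ (Fin m)) (ht : ‖t‖ = 1) (hs : ‖s‖ = 1)
    (hts : inner ℝ t s = (0 : ℝ))
    (u : EuclideanSpace ℝ (Fin m))
    (ω : EuclideanSpace ℝ (Fin m)) :
    ((4 : ℂ)⁻¹ • (tau t s * taud t s)) *
        SzegoKer m ((-(1 / 2 : ℂ) * pairTau t s u) • taudVec t s) ω =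
      (((Real.Gamma ((m : ℝ) / 2) / (2 * Real.pi ^ ((m : ℝ) / 2)) : ℝ) : ℂ) *
          (1 + pairTau t s u * pairTaud t s ω) ^ (-(m : ℂ) / 2)) •
        ((4 : ℂ)⁻¹ • (tau t s * taud t s)) := by
  set c : ℂ := -(1 / 2 : ℂ) * pairTau t s u
  have hscalar : 1 + bil (c • taudVec t s) (c • taudVec t s) - 2 * bil (c • taudVec t s) (toC ω)
      = 1 + pairTau t s u * pairTaud t s ω := by
    rw [bil_smul_left, bil_smul_right, bil_taudVec_self_eq_zero ht hs hts, bil_smul_left,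
      bil_taudVec_toC]
    ring
  have hkill : tau t s * taud t s * ιE (c • taudVec t s) = 0 := by
    rw [ιE_smul, ιE_taudVec, mul_smul_comm, mul_assoc, taud_mul_self ht hs hts, mul_zero,
      smul_zero]
  rw [SzegoKer, hscalar, mul_smul_comm, mul_add, mul_one, ← mul_assoc, smul_mul_assoc, hkill,
    smul_zero, zero_mul, add_zero]

theorem stmt11 (m : ℕ) (hm : 2 ≤ m)
    (t s : EuclideanSpace ℝ (Fin m)) (ht : ‖t‖ = 1) (hs : ‖s‖ = 1)
    (hts : inner ℝ t s = (0 : ℝ))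
    (u : EuclideanSpace ℝ (Fin m)) (hu : ‖u‖ < 1)
    (ω : EuclideanSpace ℝ (Fin m)) (hω : ‖ω‖ = 1) :
    ((4 : ℂ)⁻¹ • (tau t s * taud t s)) *
        SzegoKer m ((-(1 / 2 : ℂ) * pairTau t s u) • taudVec t s) ω =
      (((Real.Gamma ((m : ℝ) / 2) / (2 * Real.pi ^ ((m : ℝ) / 2)) : ℝ) : ℂ) *
          (1 + pairTau t s u * pairTaud t s ω) ^ (-(m : ℂ) / 2)) •
        ((4 : ℂ)⁻¹ • (tau t s * taud t s)) :=
  stmt11_general m t s ht hs hts u ω
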